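/- The family of associahedra has asymptotic k-length (k−2)/(2k−2): for every integer k ≥ 2, the ratio e_k(K(n)) / E_k(n−2) tends to (k−2)/(2k−2) as n → ∞ (limit in ℝ). -/

import Mathlib

/-- Plane binary trees: a single leaf, or `V₁ ∧ V₂` for plane binary trees `V₁, V₂`. -/
inductive PBT : Type
  | leaf : PBT
  | node : PBT → PBT → PBT

/-- Number of leaves of a plane binary tree. -/
def PBT.leaves : PBT → ℕ
  | .leaf => 1
  | .node a b => a.leaves + b.leaves

/-- `1` if the root is an internal vertex, `0` if it is a leaf. -/
def PBT.isInternal : PBT → ℕ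
  | .leaf => 0
  | .node _ _ => 1

/-- Number of left-leaning internal edges: edges joining an internal vertex to
its left child, that child being internal as well. -/
def PBT.leftE : PBT → ℕ
  | .leaf => 0
  | .node a b => a.leftE + b.leftE + a.isInternal

/-- Number of right-leaning internal edges: edges joining an internal vertex to
its right child, that child being internal as well. -/
def PBT.rightE : PBT → ℕ
  | .leaf => 0
  | .node a b => a.rightE + b.rightE + b.isInternal

/-- One right rotation applied to some subtree: somewhere a subtree
`(a ∧ b) ∧ c` is replaced by `a ∧ (b ∧ c)`. -/
inductive RightRot : PBT → PBT → Prop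
  | rot (a b c : PBT) : RightRot (.node (.node a b) c) (.node a (.node b c))
  | left {a a' : PBT} (b : PBT) : RightRot a a' → RightRot (.node a b) (.node a' b)
  | right (a : PBT) {b b' : PBT} : RightRot b b' → RightRot (.node a b) (.node a b')

/-- The Tamari order: reflexive-transitive closure of right rotation. -/
def Tamari : PBT → PBT → Prop := Relation.ReflTransGen RightRot

mutual
  /-- Schröder trees: plane rooted trees in which every internal vertex has at
  least two children (encoding faces of associahedra). -/
  inductive STree : Type
    | leaf : STree
    | node : SForest → STree
  /-- Lists of at least two Schröder trees (children of an internal vertex). -/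
  inductive SForest : Type
    | two : STree → STree → SForest
    | cons : STree → SForest → SForest
end

mutual
  /-- Number of leaves of a Schröder tree. -/
  def STree.leavesS : STree → ℕ
    | .leaf => 1
    | .node f => f.leavesF
  def SForest.leavesF : SForest → ℕ
    | .two a b => a.leavesS + b.leavesS
    | .cons a f => a.leavesS + f.leavesF
end

mutual
  /-- Number of internal vertices of a Schröder tree. -/
  def STree.vS : STree → ℕ
    | .leaf => 0
    | .node f => 1 + f.vF
  def SForest.vF : SForest → ℕ
    | .two a b => a.vS + b.vS
    | .cons a f => a.vS + f.vF
end

mutual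
  /-- `top t`: the binary tree obtained by recursively replacing each internal
  vertex with children `t₁, …, t_c` by the right comb `t₁ ∧ (t₂ ∧ (… ∧ t_c))`. -/
  def STree.top : STree → PBT
    | .leaf => .leaf
    | .node f => f.topF
  def SForest.topF : SForest → PBT
    | .two a b => .node a.top b.top
    | .cons a f => .node a.top f.topF
end

mutual
  /-- `bottom t`: the binary tree obtained by recursively replacing each internal
  vertex with children `t₁, …, t_c` by the left comb `((…(t₁ ∧ t₂)…) ∧ t_c)`. -/
  def STree.bottom : STree → PBT
    | .leaf => .leaf
    | .node f => f.bottomF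
  def SForest.bottomF : SForest → PBT
    | .two a b => .node a.bottom b.bottom
    | .cons a f => SForest.bottomAux a.bottom f
  def SForest.bottomAux : PBT → SForest → PBT
    | acc, .two a b => .node (.node acc a.bottom) b.bottom
    | acc, .cons a f => SForest.bottomAux (.node acc a.bottom) f
end

/-- `e_k(K(n))`: the minimum excess of a length-`k` face chain in the
associahedron `K(n)`.  Faces are Schröder trees with `n` leaves, of dimension
`n − 1 − v(t)`; a face chain of length `k` is a sequence
`F_1 ⊴ F_2 ⊴ … ⊴ F_k` (`F ⊴ G` meaning `top F ≤ bottom G` in the Tamari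
order) of nontrivial faces (at least `2` internal vertices); its excess is
`(n−3) − Σ_i (dim F_i − 1)`. -/
noncomputable def ekAssoc (k n : ℕ) : ℤ :=
  sInf {e : ℤ | ∃ F : Fin k → STree,
    (∀ i, (F i).leavesS = n) ∧ (∀ i, 2 ≤ (F i).vS) ∧
    (∀ i j : Fin k, (i : ℕ) + 1 = (j : ℕ) → Tamari (F i).top (F j).bottom) ∧
    e = ((n : ℤ) - 3) - ∑ i : Fin k, ((((n : ℤ) - 1 - (F i).vS)) - 1)}

/-!
Right rotations never decrease the number `rightE` of right-leaning internal edges. For a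
Schröder tree `F` with `n` leaves, `top F` has at least `n - 1 - v(F)` such edges (the inner
edges of its right combs), while `bottom G` has at most `v(G) - 1`. Hence `F ⊴ G` forces
`n ≤ v(F) + v(G)`; as `bottom G ≤ top G`, this applies to faces at distance one and two in a
chain, and summing gives `k n ≤ 2 Σ v(F_i)`, i.e. `2 e_k(K(n)) ≥ (2 - k) n + O(k)`.

Conversely, the faces `stairFace p s i` (a spine of `p - i` right leaves over `s + ⌊i/2⌋`
ternary vertices `(leaf, ·, leaf)`, plus one more binary vertex for odd `i`) satisfy
`top F_i = bottom F_{i+1}`, and all have about `n / 2` internal vertices. So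
`e_k(K(n)) = (2 - k) n / 2 + O(k²)`, while `E_k(n - 2) = (1 - k) n + O(k)`.
-/

open Filter Topology

theorem PBT.isInternal_le_one (t : PBT) : t.isInternal ≤ 1 := by
  cases t <;> simp [PBT.isInternal]

theorem RightRot.isInternal_eq_one {x y : PBT} (h : RightRot x y) :
    x.isInternal = 1 ∧ y.isInternal = 1 := by
  cases h <;> simp [PBT.isInternal]

theorem RightRot.rightE_le {x y : PBT} (h : RightRot x y) : x.rightE ≤ y.rightE := by
  induction h with
  | rot a b c => cases b <;> simp only [PBT.rightE, PBT.isInternal] <;> omega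
  | left b _ ih => simp only [PBT.rightE]; omega
  | right a h ih =>
    have := h.isInternal_eq_one
    simp only [PBT.rightE]
    omega

namespace Tamari

theorem trans {x y z : PBT} (hxy : Tamari x y) (hyz : Tamari y z) : Tamari x z :=
  Relation.ReflTransGen.trans hxy hyz

theorem rightE_le {x y : PBT} (h : Tamari x y) : x.rightE ≤ y.rightE := by
  induction h with
  | refl => exact le_rfl
  | tail _ hyz ih => exact ih.trans hyz.rightE_le

theorem node {a a' b b' : PBT} (ha : Tamari a a') (hb : Tamari b b') :
    Tamari (.node a b) (.node a' b') :=
  (ha.lift (PBT.node · b) fun _ _ => RightRot.left b).trans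
    (hb.lift (PBT.node a') fun _ _ => RightRot.right a')

end Tamari

mutual

theorem STree.tamari_bottom_top : ∀ t : STree, Tamari t.bottom t.top
  | .leaf => .refl
  | .node f => SForest.tamari_bottomF_topF f

theorem SForest.tamari_bottomF_topF : ∀ f : SForest, Tamari f.bottomF f.topF
  | .two a b => .node a.tamari_bottom_top b.tamari_bottom_top
  | .cons a f => (SForest.tamari_bottomAux f a.bottom).trans (.node a.tamari_bottom_top .refl)

theorem SForest.tamari_bottomAux :
    ∀ (f : SForest) (acc : PBT), Tamari (SForest.bottomAux acc f) (.node acc f.topF)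
  | .two a b, acc =>
    (Tamari.node (.node .refl a.tamari_bottom_top) b.tamari_bottom_top).trans
      (.single (.rot acc a.top b.top))
  | .cons a f, acc =>
    ((SForest.tamari_bottomAux f (.node acc a.bottom)).trans
      (.node (.node .refl a.tamari_bottom_top) .refl)).trans
      (.single (.rot acc a.top f.topF))

end

theorem SForest.isInternal_topF (f : SForest) : f.topF.isInternal = 1 := by
  cases f <;> rfl

mutual

theorem STree.leavesS_le_rightE_top : ∀ t : STree, t.leavesS ≤ t.top.rightE + t.vS + 1
  | .leaf => le_rfl
  | .node f => by
    have := SForest.leavesF_le_rightE_topF f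
    simp only [STree.leavesS, STree.top, STree.vS]
    omega

theorem SForest.leavesF_le_rightE_topF : ∀ f : SForest, f.leavesF ≤ f.topF.rightE + f.vF + 2
  | .two a b => by
    have := a.leavesS_le_rightE_top
    have := b.leavesS_le_rightE_top
    simp only [SForest.leavesF, SForest.topF, SForest.vF, PBT.rightE]
    omega
  | .cons a f => by
    have := a.leavesS_le_rightE_top
    have := SForest.leavesF_le_rightE_topF f
    have := f.isInternal_topF
    simp only [SForest.leavesF, SForest.topF, SForest.vF, PBT.rightE]
    omega

end

mutual

theorem STree.rightE_bottom_add_isInternal_le :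
    ∀ t : STree, t.bottom.rightE + t.bottom.isInternal ≤ t.vS
  | .leaf => le_rfl
  | .node f => by
    have := SForest.rightE_bottomF_le f
    have := f.bottomF.isInternal_le_one
    simp only [STree.bottom, STree.vS]
    omega

theorem SForest.rightE_bottomF_le : ∀ f : SForest, f.bottomF.rightE ≤ f.vF
  | .two a b => by
    have := a.rightE_bottom_add_isInternal_le
    have := b.rightE_bottom_add_isInternal_le
    simp only [SForest.bottomF, SForest.vF, PBT.rightE]
    omega
  | .cons a f => by
    have := a.rightE_bottom_add_isInternal_le
    have := SForest.rightE_bottomAux_le f a.bottom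
    simp only [SForest.bottomF, SForest.vF]
    omega

theorem SForest.rightE_bottomAux_le :
    ∀ (f : SForest) (acc : PBT), (SForest.bottomAux acc f).rightE ≤ acc.rightE + f.vF
  | .two a b, acc => by
    have := a.rightE_bottom_add_isInternal_le
    have := b.rightE_bottom_add_isInternal_le
    simp only [SForest.bottomAux, SForest.vF, PBT.rightE]
    omega
  | .cons a f, acc => by
    have := a.rightE_bottom_add_isInternal_le
    have := SForest.rightE_bottomAux_le f (.node acc a.bottom)
    simp only [SForest.bottomAux, SForest.vF, PBT.rightE] at *
    omega

end

theorem STree.leavesS_le_vS_add_vS_of_tamari {F G : STree} (hG : 0 < G.vS)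
    (h : Tamari F.top G.bottom) : F.leavesS ≤ F.vS + G.vS := by
  cases G with
  | leaf => simp [STree.vS] at hG
  | node f =>
    have := F.leavesS_le_rightE_top
    have := h.rightE_le
    have := SForest.rightE_bottomF_le f
    simp only [STree.bottom, STree.vS] at *
    omega

/-- Pair off consecutive terms; for odd `k` the first three terms are bounded together
using the bounds at distance one and two. -/
theorem mul_le_two_mul_sum_range {n : ℕ} {w : ℕ → ℕ} : ∀ {k : ℕ}, 2 ≤ k →
    (∀ i, i + 1 < k → n ≤ w i + w (i + 1)) → (∀ i, i + 2 < k → n ≤ w i + w (i + 2)) →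
    k * n ≤ 2 * ∑ i ∈ Finset.range k, w i
  | 2, _, h₁, _ => by
    have : n ≤ w 0 + w 1 := h₁ 0 (by norm_num)
    simp only [Finset.sum_range_succ, Finset.sum_range_zero]
    omega
  | 3, _, h₁, h₂ => by
    have : n ≤ w 0 + w 1 := h₁ 0 (by norm_num)
    have : n ≤ w 1 + w 2 := h₁ 1 (by norm_num)
    have : n ≤ w 0 + w 2 := h₂ 0 (by norm_num)
    simp only [Finset.sum_range_succ, Finset.sum_range_zero]
    omega
  | k + 4, _, h₁, h₂ => by
    have := mul_le_two_mul_sum_range (k := k + 2) (by omega)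
      (fun i hi => h₁ i (by omega)) (fun i hi => h₂ i (by omega))
    have := h₁ (k + 2) (by omega)
    rw [Finset.sum_range_succ, Finset.sum_range_succ]
    linarith

structure IsFaceChain (n : ℕ) {k : ℕ} (F : Fin k → STree) : Prop where
  leavesS_eq : ∀ i, (F i).leavesS = n
  two_le_vS : ∀ i, 2 ≤ (F i).vS
  tamari : ∀ i j : Fin k, (i : ℕ) + 1 = j → Tamari (F i).top (F j).bottom

namespace IsFaceChain

variable {n k : ℕ} {F : Fin k → STree}

theorem tamari_of_add_two (hF : IsFaceChain n F) (i j : Fin k) (hij : (i : ℕ) + 2 = j) :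
    Tamari (F i).top (F j).bottom :=
  let m : Fin k := ⟨i + 1, by omega⟩
  ((hF.tamari i m rfl).trans (F m).tamari_bottom_top).trans (hF.tamari m j (by simp [m]; omega))

theorem le_vS_add_vS (hF : IsFaceChain n F) {i j : Fin k} (h : Tamari (F i).top (F j).bottom) :
    n ≤ (F i).vS + (F j).vS :=
  hF.leavesS_eq i ▸ STree.leavesS_le_vS_add_vS_of_tamari (by linarith [hF.two_le_vS j]) h

theorem mul_le_two_mul_sum_vS (hF : IsFaceChain n F) (hk : 2 ≤ k) :
    k * n ≤ 2 * ∑ i, (F i).vS := by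
  let w : ℕ → ℕ := fun i => if h : i < k then (F ⟨i, h⟩).vS else 0
  have hw : ∑ i, (F i).vS = ∑ i ∈ Finset.range k, w i := by
    rw [← Fin.sum_univ_eq_sum_range]
    simp [w]
  rw [hw]
  refine mul_le_two_mul_sum_range hk (fun i hi => ?_) (fun i hi => ?_)
  · simpa [w, show i < k by omega, hi] using
      hF.le_vS_add_vS (hF.tamari ⟨i, by omega⟩ ⟨i + 1, hi⟩ rfl)
  · simpa [w, show i < k by omega, hi] using
      hF.le_vS_add_vS (hF.tamari_of_add_two ⟨i, by omega⟩ ⟨i + 2, hi⟩ rfl)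

end IsFaceChain

theorem ekAssoc_eq_sInf (k n : ℕ) :
    ekAssoc k n = sInf ((fun F : Fin k → STree =>
      (n : ℤ) - 3 - k * ((n : ℤ) - 2) + ∑ i, ((F i).vS : ℤ)) '' {F | IsFaceChain n F}) := by
  have hexcess (F : Fin k → STree) : (n : ℤ) - 3 - ∑ i, ((n : ℤ) - 1 - (F i).vS - 1) =
      (n : ℤ) - 3 - k * ((n : ℤ) - 2) + ∑ i, ((F i).vS : ℤ) := by
    simp only [Finset.sum_sub_distrib, Finset.sum_const, Finset.card_univ, Fintype.card_fin]
    ring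
  unfold ekAssoc
  congr 1
  ext e
  simp only [hexcess, Set.mem_image, Set.mem_ofPred_eq]
  exact ⟨fun ⟨F, hl, hv, ht, he⟩ => ⟨F, ⟨hl, hv, ht⟩, he.symm⟩,
    fun ⟨F, ⟨hl, hv, ht⟩, he⟩ => ⟨F, hl, hv, ht, he.symm⟩⟩

def PBT.appendLeaf (x : PBT) : PBT := .node x .leaf

def PBT.prependLeaf (x : PBT) : PBT := .node .leaf x

def STree.appendLeaf (x : STree) : STree := .node (.two x .leaf)

def STree.surroundLeaves (x : STree) : STree := .node (.cons .leaf (.two x .leaf))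

open Function

namespace STree

theorem semiconj_leavesS_appendLeaf : Semiconj leavesS appendLeaf (· + 1) := fun _ => rfl

theorem semiconj_leavesS_surroundLeaves : Semiconj leavesS surroundLeaves (· + 2) := fun x => by
  simp only [surroundLeaves, leavesS, SForest.leavesF]
  omega

theorem semiconj_vS_appendLeaf : Semiconj vS appendLeaf (· + 1) := fun x => by
  simp only [appendLeaf, vS, SForest.vF]
  omega

theorem semiconj_vS_surroundLeaves : Semiconj vS surroundLeaves (· + 1) := fun x => by
  simp only [surroundLeaves, vS, SForest.vF]
  omega

theorem semiconj_top_appendLeaf : Semiconj top appendLeaf PBT.appendLeaf := fun _ => rfl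

theorem semiconj_bottom_appendLeaf : Semiconj bottom appendLeaf PBT.appendLeaf := fun _ => rfl

theorem semiconj_top_surroundLeaves :
    Semiconj top surroundLeaves (PBT.prependLeaf ∘ PBT.appendLeaf) := fun _ => rfl

theorem semiconj_bottom_surroundLeaves :
    Semiconj bottom surroundLeaves (PBT.appendLeaf ∘ PBT.prependLeaf) := fun _ => rfl

/-- `A (BA)^s = (AB)^s A` for `A = appendLeaf`, `B = prependLeaf`: moving one appended leaf
inside the surrounded part turns `top` of a face into `bottom` of the next one. -/
theorem top_appendLeaf_iterate_succ {b b' : STree} (h : b.top.appendLeaf = b'.bottom) (q s : ℕ) :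
    (appendLeaf^[q + 1] (surroundLeaves^[s] b)).top =
      (appendLeaf^[q] (surroundLeaves^[s] b')).bottom := by
  have hA : Semiconj PBT.appendLeaf (PBT.prependLeaf ∘ PBT.appendLeaf)
      (PBT.appendLeaf ∘ PBT.prependLeaf) := fun _ => rfl
  rw [iterate_succ_apply, (semiconj_top_appendLeaf.iterate_right q).eq,
    (semiconj_bottom_appendLeaf.iterate_right q).eq, semiconj_top_appendLeaf.eq,
    (semiconj_top_surroundLeaves.iterate_right s).eq,
    (semiconj_bottom_surroundLeaves.iterate_right s).eq, (hA.iterate_right s).eq, h]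

end STree

open STree in
def stairFace (p s i : ℕ) : STree :=
  appendLeaf^[p - i] (surroundLeaves^[s + i / 2] (appendLeaf^[i % 2] .leaf))

theorem stairFace_leavesS {p i : ℕ} (s : ℕ) (hi : i ≤ p) :
    (stairFace p s i).leavesS = p + 2 * s + 1 := by
  simp only [stairFace, (STree.semiconj_leavesS_appendLeaf.iterate_right _).eq,
    (STree.semiconj_leavesS_surroundLeaves.iterate_right _).eq, add_right_iterate_apply,
    smul_eq_mul, STree.leavesS]
  omega

theorem stairFace_vS (p s i : ℕ) : (stairFace p s i).vS = p - i + (s + i / 2) + i % 2 := by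
  simp only [stairFace, (STree.semiconj_vS_appendLeaf.iterate_right _).eq,
    (STree.semiconj_vS_surroundLeaves.iterate_right _).eq, add_right_iterate_apply,
    smul_eq_mul, STree.vS]
  omega

theorem stairFace_top_eq_bottom_succ {p i : ℕ} (s : ℕ) (hi : i < p) :
    (stairFace p s i).top = (stairFace p s (i + 1)).bottom := by
  obtain ⟨q, hq, hq'⟩ : ∃ q, p - i = q + 1 ∧ p - (i + 1) = q := ⟨p - i - 1, by omega, by omega⟩
  simp only [stairFace, hq, hq']
  obtain ⟨m, rfl | rfl⟩ := Nat.even_or_odd' i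
  · rw [show (2 * m + 1) / 2 = m by omega, show (2 * m + 1) % 2 = 1 by omega,
      show 2 * m / 2 = m by omega, show 2 * m % 2 = 0 by omega]
    exact STree.top_appendLeaf_iterate_succ rfl q (s + m)
  · rw [show (2 * m + 1 + 1) / 2 = m + 1 by omega, show (2 * m + 1 + 1) % 2 = 0 by omega,
      show (2 * m + 1) / 2 = m by omega, show (2 * m + 1) % 2 = 1 by omega, ← add_assoc,
      iterate_succ_apply]
    exact STree.top_appendLeaf_iterate_succ rfl q (s + m)

theorem isFaceChain_stairFace {k p s : ℕ} (hk : 2 ≤ k) (hp : k - 1 ≤ p) (hs : 1 ≤ s) :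
    IsFaceChain (p + 2 * s + 1) fun i : Fin k => stairFace p s i where
  leavesS_eq i := stairFace_leavesS s (by omega)
  two_le_vS i := by rw [stairFace_vS]; omega
  tamari i j hij := by
    have := j.isLt
    rw [← hij, ← stairFace_top_eq_bottom_succ s (by omega)]
    exact .refl

theorem sum_stairFace_vS_le {k p : ℕ} (s : ℕ) (hp : k - 1 ≤ p) :
    ∑ i : Fin k, (stairFace p s i).vS ≤ k * (p + s) := by
  simpa using Finset.sum_le_card_nsmul Finset.univ (fun i : Fin k => (stairFace p s i).vS)
    (p + s) fun i _ => by
      have := i.isLt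
      rw [stairFace_vS]
      omega

theorem ekAssoc_bounds {k n : ℕ} (hk : 2 ≤ k) (hn : k + 3 ≤ n) :
    (2 - k) * (n : ℤ) + 4 * k - 6 ≤ 2 * ekAssoc k n ∧
      2 * ekAssoc k n ≤ (2 - k) * (n : ℤ) + k ^ 2 + 3 * k - 6 := by
  obtain ⟨p, s, hp, hpk, hs, rfl⟩ : ∃ p s, k - 1 ≤ p ∧ p ≤ k ∧ 1 ≤ s ∧ n = p + 2 * s + 1 := by
    by_cases h : (n + k) % 2 = 0
    · exact ⟨k - 1, (n - k) / 2, le_rfl, by omega, by omega, by omega⟩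
    · exact ⟨k, (n - k - 1) / 2, by omega, le_rfl, by omega, by omega⟩
  have hstair := isFaceChain_stairFace hk hp hs
  rw [ekAssoc_eq_sInf]
  set n := p + 2 * s + 1
  set excess := fun F : Fin k → STree => (n : ℤ) - 3 - k * ((n : ℤ) - 2) + ∑ i, ((F i).vS : ℤ)
  have hbdd : BddBelow (excess '' {F | IsFaceChain n F}) := by
    refine ⟨n - 3 - k * ((n : ℤ) - 2), ?_⟩
    rintro _ ⟨F, -, rfl⟩
    simp only [excess, le_add_iff_nonneg_right]
    positivity
  constructor
  · have hne : (excess '' {F | IsFaceChain n F}).Nonempty := ⟨_, _, hstair, rfl⟩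
    obtain ⟨F, hF, hmin⟩ := Int.csInf_mem hne hbdd
    have hsum : (k : ℤ) * n ≤ 2 * ∑ i, ((F i).vS : ℤ) := by
      exact_mod_cast hF.mul_le_two_mul_sum_vS hk
    rw [← hmin]
    linarith
  · have hsum : ∑ i : Fin k, ((stairFace p s i).vS : ℤ) ≤ k * (p + s) := by
      exact_mod_cast sum_stairFace_vS_le s hp
    have hpk' : (p : ℤ) ≤ k := by exact_mod_cast hpk
    have hmin := csInf_le hbdd ⟨_, hstair, rfl⟩
    simp only [excess, n] at hmin ⊢
    push_cast at hmin ⊢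
    nlinarith

theorem tendsto_div_natCast_of_abs_sub_le {f : ℕ → ℝ} {a C : ℝ}
    (hf : ∀ᶠ n in atTop, |f n - a * n| ≤ C) : Tendsto (fun n => f n / n) atTop (𝓝 a) := by
  have hdev : Tendsto (fun n : ℕ => (f n - a * n) / n) atTop (𝓝 0) := by
    refine squeeze_zero_norm' ?_ (tendsto_const_div_atTop_nhds_zero_nat C)
    filter_upwards [hf] with n hn
    rw [norm_div, Real.norm_eq_abs, RCLike.norm_natCast]
    gcongr
  simpa using (hdev.const_add a).congr' <| (eventually_ne_atTop 0).mono fun n hn => by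
    field_simp
    ring

theorem tendsto_div_of_abs_sub_le {f g : ℕ → ℝ} {a b C D : ℝ} (hb : b ≠ 0)
    (hf : ∀ᶠ n in atTop, |f n - a * n| ≤ C) (hg : ∀ᶠ n in atTop, |g n - b * n| ≤ D) :
    Tendsto (fun n => f n / g n) atTop (𝓝 (a / b)) :=
  ((tendsto_div_natCast_of_abs_sub_le hf).div (tendsto_div_natCast_of_abs_sub_le hg) hb).congr' <|
    (eventually_ne_atTop 0).mono fun n hn => div_div_div_cancel_right₀ (by exact_mod_cast hn) _ _

/-- The family of associahedra has asymptotic `k`-length `(k−2)/(2k−2)`: for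
every `k ≥ 2`, the ratio `e_k(K(n)) / E_k(n−2)` tends to `(k−2)/(2k−2)` as
`n → ∞`, where `E_k(d) = (1−k)d + 2k − 1`. -/
theorem associahedra_asymptotic_k_length (k : ℕ) (hk : 2 ≤ k) :
    Filter.Tendsto
      (fun n : ℕ => (ekAssoc k n : ℝ) /
        ((1 - (k : ℝ)) * ((n : ℝ) - 2) + 2 * (k : ℝ) - 1))
      Filter.atTop (nhds (((k : ℝ) - 2) / (2 * (k : ℝ) - 2))) := by
  have hk' : (2 : ℝ) ≤ k := by exact_mod_cast hk
  have hlimit : ((k : ℝ) - 2) / (2 * k - 2) = ((2 - k) / 2) / (1 - k) := by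
    rw [div_div, div_eq_div_iff] <;> [ring; linarith; linarith]
  rw [hlimit]
  refine tendsto_div_of_abs_sub_le (by linarith) (C := k ^ 2 + 3 * k) (D := |4 * k - 3|) ?_
    (.of_forall fun n => le_of_eq (by ring_nf))
  filter_upwards [eventually_ge_atTop (k + 3)] with n hn
  obtain ⟨hlo, hhi⟩ := ekAssoc_bounds hk hn
  have hlo' : (2 - k) * (n : ℝ) + 4 * k - 6 ≤ 2 * ekAssoc k n := by exact_mod_cast hlo
  have hhi' : 2 * (ekAssoc k n : ℝ) ≤ (2 - k) * n + k ^ 2 + 3 * k - 6 := by exact_mod_cast hhi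
  rw [abs_le]
  constructor <;> nlinarith
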